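/- arXiv:1604.08538 — 5 statements merged into one kernel-verified Lean document; each statement's English description precedes it below -/
import Mathlib

section
/- Let C ≤ G^n be a proper additive MDS code of cardinality |C| = |G|^k (i.e., the minimum distance of C equals n − k + 1). Then the dual code C⊥ ⊆ Ĝ^n has cardinality |G|^{n−k} and is MDS with minimum distance k + 1. -/
/-- The dual code of a set `C ⊆ Gⁿ` of words. -/
def dualCodeSet {G : Type*} [AddCommGroup G] (n : ℕ) (C : Set (Fin n → G)) :
    Set (Fin n → AddChar G ℂ) :=
  {π | ∀ c ∈ C, ∏ j, π j (c j) = 1}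

/-- The Hamming weight of a tuple of characters: the number of nontrivial coordinates. -/
noncomputable def charWeight {G : Type*} [AddCommGroup G] {n : ℕ}
    (π : Fin n → AddChar G ℂ) : ℕ :=
  Nat.card {j : Fin n // π j ≠ 1}

/-!
Distinct words of an MDS code `C` of size `|G|^k` differ in at least `n - k + 1` places, so its
projection onto any `k` coordinates is injective, hence bijective by counting. A nontrivial
`π ∈ C⊥` supported on at most `k` coordinates is therefore seen by the codeword that equals
`g • e_j` on a `k`-set containing the support, where `π_j g ≠ 1`; so `C⊥` has minimum weight at
least `k + 1`. Identifying `Ĝⁿ` with the character group of `Gⁿ`, `C⊥` is the annihilator of `C`,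
i.e. the character group of `Gⁿ ⧸ C`, of order `|G|^(n-k)`. The projection argument now applies
to `C⊥` on `n - k` coordinates, and prescribing one nontrivial and `n - k - 1` trivial characters
there gives a dual word of weight at most `k + 1`.
-/

open Finset Function

namespace AddChar

theorem card_annihilator {A : Type*} [AddCommGroup A] [Finite A] (H : AddSubgroup A) :
    Nat.card {ψ : AddChar A ℂ // ∀ h ∈ H, ψ h = 1} = Nat.card (A ⧸ H) := by
  let e : AddChar (A ⧸ H) ℂ → {ψ : AddChar A ℂ // ∀ h ∈ H, ψ h = 1} := fun χ =>
    ⟨χ.compAddMonoidHom (QuotientAddGroup.mk' H), fun h hh => by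
      simp [(QuotientAddGroup.eq_zero_iff h).2 hh]⟩
  have he : Bijective e := by
    refine ⟨fun χ χ' h => compAddMonoidHom_injective_left _ (QuotientAddGroup.mk'_surjective H)
      (congrArg Subtype.val h), fun ψ => ?_⟩
    refine ⟨toAddMonoidHomEquiv.symm
      (QuotientAddGroup.lift H ψ.1.toAddMonoidHom fun h hh => ?_), ?_⟩
    · simp [ψ.2 h hh]
    · ext a; rfl
  have := Fintype.ofFinite (A ⧸ H)
  rw [← Nat.card_eq_of_bijective e he, Nat.card_eq_fintype_card, card_eq, Nat.card_eq_fintype_card]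

def pi {ι G R : Type*} [Fintype ι] [AddCommMonoid G] [CommMonoid R] (π : ι → AddChar G R) :
    AddChar (ι → G) R where
  toFun c := ∏ j, π j (c j)
  map_zero_eq_one' := by simp
  map_add_eq_mul' c c' := by simp [map_add_eq_mul, prod_mul_distrib]

theorem pi_apply {ι G R : Type*} [Fintype ι] [AddCommMonoid G] [CommMonoid R]
    (π : ι → AddChar G R) (c : ι → G) : pi π c = ∏ j, π j (c j) := rfl

theorem pi_single {ι G R : Type*} [Fintype ι] [DecidableEq ι] [AddCommMonoid G]
    [CommMonoid R] (π : ι → AddChar G R) (j : ι) (g : G) : pi π (Pi.single j g) = π j g := by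
  rw [pi_apply, Fintype.prod_eq_single j fun i hi => by simp [hi]]
  simp

theorem pi_injective {ι G R : Type*} [Fintype ι] [DecidableEq ι] [AddCommMonoid G]
    [CommMonoid R] :
    Injective (pi : (ι → AddChar G R) → AddChar (ι → G) R) := by
  intro π π' h
  ext j g
  simpa only [pi_single] using DFunLike.congr_fun h (Pi.single j g)

theorem pi_bijective {ι G : Type*} [Fintype ι] [DecidableEq ι] [AddCommGroup G] [Fintype G] :
    Bijective (pi : (ι → AddChar G ℂ) → AddChar (ι → G) ℂ) := by
  rw [Fintype.bijective_iff_injective_and_card]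
  exact ⟨pi_injective, by simp⟩

instance nontrivial {G : Type*} [AddCommGroup G] [Fintype G] [Nontrivial G] :
    Nontrivial (AddChar G ℂ) :=
  Fintype.one_lt_card_iff_nontrivial.1 (card_eq (α := G) ▸ Fintype.one_lt_card)

end AddChar

section Projection

variable {ι β : Type*} [Fintype ι] [DecidableEq ι] [DecidableEq β]

theorem hammingDist_le_card_compl_of_eqOn {x y : ι → β} {S : Finset ι}
    (h : ∀ j ∈ S, x j = y j) : hammingDist x y ≤ Sᶜ.card :=
  card_le_card fun j hj => mem_compl.2 fun hjS => (mem_filter.1 hj).2 (h j hjS)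

theorem exists_mem_eqOn_of_card_eq [Fintype β] {D : Set (ι → β)} {S : Finset ι}
    (hdist : ∀ x ∈ D, ∀ y ∈ D, x ≠ y → Sᶜ.card < hammingDist x y)
    (hcard : Nat.card D = Fintype.card β ^ S.card) (x : ι → β) :
    ∃ d ∈ D, ∀ j ∈ S, d j = x j := by
  have : Fintype D := Fintype.ofFinite D
  let restrictS : D → S → β := fun d j => d.1 j
  have hinj : Injective restrictS := fun d d' h => by
    by_contra hne
    have := hammingDist_le_card_compl_of_eqOn (S := S) fun j hj => congrFun h ⟨j, hj⟩
    exact (hdist d d.2 d' d'.2 (Subtype.coe_ne_coe.2 hne)).not_ge this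
  have hbij : Bijective restrictS := by
    rw [Fintype.bijective_iff_injective_and_card, ← Nat.card_eq_fintype_card, hcard]
    simp [hinj]
  obtain ⟨d, hd⟩ := hbij.surjective fun j => x j
  exact ⟨d, d.2, fun j hj => congrFun hd ⟨j, hj⟩⟩

theorem exists_mem_ne_hammingDist_le [Nontrivial β] {D : Set (ι → β)} {T : Finset ι}
    (hD : ∀ x : ι → β, ∃ d ∈ D, ∀ j ∈ T, d j = x j) {j₀ : ι} (hj₀ : j₀ ∈ T) (y : ι → β) :
    ∃ d ∈ D, d ≠ y ∧ hammingDist d y ≤ Tᶜ.card + 1 := by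
  obtain ⟨b, hb⟩ := exists_ne (y j₀)
  obtain ⟨d, hdD, hd⟩ := hD (update y j₀ b)
  refine ⟨d, hdD, fun h => hb (by simpa [h] using (hd j₀ hj₀).symm), ?_⟩
  calc hammingDist d y ≤ (Tᶜ ∪ {j₀}).card := card_le_card fun j hj => by
        have hj : d j ≠ y j := (mem_filter.1 hj).2
        by_contra hjT
        simp only [mem_union, mem_compl, mem_singleton, not_or, not_not] at hjT
        simp [hd j hjT.1, hjT.2] at hj
    _ ≤ Tᶜ.card + 1 := card_union_le _ _

end Projection

section DualCode

variable {G : Type*} [AddCommGroup G] {n : ℕ}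

theorem div_mem_dualCodeSet {C : Set (Fin n → G)} {π π' : Fin n → AddChar G ℂ}
    (hπ : π ∈ dualCodeSet n C) (hπ' : π' ∈ dualCodeSet n C) : π / π' ∈ dualCodeSet n C := by
  intro c hc
  simp only [Pi.div_apply, AddChar.div_apply', prod_div_distrib, hπ c hc, hπ' c hc, div_one]

theorem charWeight_eq_hammingDist_one [DecidableEq (AddChar G ℂ)] (π : Fin n → AddChar G ℂ) :
    charWeight π = hammingDist π 1 := by
  rw [charWeight, Nat.card_eq_fintype_card, Fintype.card_subtype]
  rfl

theorem hammingDist_eq_charWeight_div [DecidableEq (AddChar G ℂ)] (π π' : Fin n → AddChar G ℂ) :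
    hammingDist π π' = charWeight (π / π') := by
  rw [charWeight_eq_hammingDist_one]
  simp only [hammingDist, Pi.div_apply, Pi.one_apply, ne_eq, div_eq_one]

theorem card_dualCodeSet_mul_card [Fintype G] (C : AddSubgroup (Fin n → G)) :
    Nat.card (dualCodeSet n (C : Set (Fin n → G))) * Nat.card C = Fintype.card G ^ n := by
  classical
  have hpi : dualCodeSet n (C : Set (Fin n → G)) ≃
      {ψ : AddChar (Fin n → G) ℂ // ∀ c ∈ C, ψ c = 1} :=
    (Equiv.ofBijective _ AddChar.pi_bijective).subtypeEquiv fun _ => Iff.rfl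
  rw [Nat.card_congr hpi, AddChar.card_annihilator,
    ← AddSubgroup.card_eq_card_quotient_mul_card_addSubgroup, Nat.card_eq_fintype_card,
    Fintype.card_fun, Fintype.card_fin]

theorem le_charWeight_of_mem_dualCodeSet {C : Set (Fin n → G)} {k : ℕ} (hkn : k ≤ n)
    (hC : ∀ S : Finset (Fin n), S.card = k → ∀ x : Fin n → G, ∃ c ∈ C, ∀ j ∈ S, c j = x j)
    {π : Fin n → AddChar G ℂ} (hπ : π ∈ dualCodeSet n C) (hπ1 : π ≠ 1) :
    k + 1 ≤ charWeight π := by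
  classical
  by_contra! hlt
  let T : Finset (Fin n) := {j | π j ≠ 1}
  have hT : T.card ≤ k := by
    have : charWeight π = T.card := by
      rw [charWeight, Nat.card_eq_fintype_card, Fintype.card_subtype]
    omega
  obtain ⟨S, hTS, -, hS⟩ := exists_subsuperset_card_eq T.subset_univ hT (by simpa using hkn)
  obtain ⟨j₀, hj₀⟩ := Function.ne_iff.1 hπ1
  obtain ⟨g, hg⟩ := AddChar.ne_one_iff.1 hj₀
  obtain ⟨c, hcC, hc⟩ := hC S hS (Pi.single j₀ g)
  -- `π` is trivial off `S`, and `c` vanishes on `S` except at `j₀`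
  have hprod : ∏ j, π j (c j) = π j₀ g := by
    rw [Fintype.prod_eq_single j₀ fun j hj => ?_, hc j₀ (hTS (by simpa [T] using hj₀)),
      Pi.single_eq_same]
    by_cases hjS : j ∈ S
    · rw [hc j hjS, Pi.single_eq_of_ne hj, AddChar.map_zero_eq_one]
    · have : π j = 1 := by simpa [T] using mt (@hTS j) hjS
      rw [this, AddChar.one_apply]
  exact hg (hprod ▸ hπ c hcC)

end DualCode

theorem lt_of_ne_top_of_card_eq_pow {G : Type*} [AddCommGroup G] [Fintype G] [Nontrivial G]
    {n k : ℕ} {C : AddSubgroup (Fin n → G)} (hC : C ≠ ⊤)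
    (hcard : Nat.card C = Fintype.card G ^ k) : k < n := by
  by_contra! hnk
  refine hC (AddSubgroup.eq_top_of_card_eq C (le_antisymm C.card_le_card_addGroup ?_))
  rw [hcard, Nat.card_eq_fintype_card, Fintype.card_fun, Fintype.card_fin]
  exact Nat.pow_le_pow_right Fintype.card_pos hnk

/-- If `C ⪇ Gⁿ` is a proper additive MDS code of cardinality `|G|^k`
(i.e. of minimum distance `n - k + 1`), then its dual `C⊥ ⊆ Ĝⁿ` has cardinality
`|G|^(n-k)` and is MDS with minimum distance `k + 1`. -/
theorem dual_of_MDS_is_MDS {G : Type*} [AddCommGroup G] [Fintype G] [DecidableEq G] [Nontrivial G]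
    (n k : ℕ) (C : AddSubgroup (Fin n → G)) (hC : C ≠ ⊤)
    (hcard : Nat.card C = Fintype.card G ^ k)
    (hmin : IsLeast {w | ∃ c ∈ C, c ≠ 0 ∧ hammingNorm c = w} (n - k + 1)) :
    Nat.card (dualCodeSet n (C : Set (Fin n → G))) = Fintype.card G ^ (n - k) ∧
    IsLeast {w | ∃ π ∈ dualCodeSet n (C : Set (Fin n → G)),
      π ≠ (fun _ => 1) ∧ charWeight π = w} (k + 1) := by
  classical
  set D := dualCodeSet n (C : Set (Fin n → G))
  have hkn : k < n := lt_of_ne_top_of_card_eq_pow hC hcard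
  have hC_onto (S : Finset (Fin n)) (hS : S.card = k) (x : Fin n → G) :
      ∃ c ∈ (C : Set (Fin n → G)), ∀ j ∈ S, c j = x j := by
    refine exists_mem_eqOn_of_card_eq (fun c hc c' hc' hne => ?_) (hS ▸ hcard) x
    have := hmin.2 ⟨-c + c', add_mem (neg_mem hc) hc', fun h => hne (neg_add_eq_zero.1 h), rfl⟩
    rw [hammingDist_eq_hammingNorm, card_compl, Fintype.card_fin, hS]
    omega
  have hD_weight (π) (hπ : π ∈ D) (hπ1 : π ≠ 1) : k + 1 ≤ charWeight π :=
    le_charWeight_of_mem_dualCodeSet hkn.le hC_onto hπ hπ1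
  have hD_card : Nat.card D = Fintype.card G ^ (n - k) := by
    have := card_dualCodeSet_mul_card C
    rw [hcard, ← pow_sub_mul_pow _ hkn.le] at this
    exact Nat.eq_of_mul_eq_mul_right (pow_pos Fintype.card_pos k) this
  obtain ⟨T, -, hT⟩ := exists_subset_card_eq (s := (univ : Finset (Fin n))) (n := n - k) (by simp)
  obtain ⟨j₀, hj₀⟩ : T.Nonempty := card_pos.1 (by omega)
  have hD_onto (x : Fin n → AddChar G ℂ) : ∃ π ∈ D, ∀ j ∈ T, π j = x j := by
    refine exists_mem_eqOn_of_card_eq (fun π hπ π' hπ' hne => ?_)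
      (by rw [hD_card, hT, AddChar.card_eq]) x
    have := hD_weight _ (div_mem_dualCodeSet hπ hπ') (div_ne_one.2 hne)
    rw [hammingDist_eq_charWeight_div, card_compl, Fintype.card_fin, hT]
    omega
  obtain ⟨π, hπD, hπ1, hπw⟩ := exists_mem_ne_hammingDist_le hD_onto hj₀ 1
  rw [← charWeight_eq_hammingDist_one, card_compl, Fintype.card_fin, hT] at hπw
  refine ⟨hD_card, ⟨π, hπD, hπ1, le_antisymm ?_ (hD_weight π hπD hπ1)⟩, ?_⟩
  · omega
  · rintro w ⟨σ, hσD, hσ1, rfl⟩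
    exact hD_weight σ hσD hσ1
end

section
/- Let C = MDS(n,d) ≤ G^n be an additive MDS code of minimum distance d over a finite abelian group G. Then for any subset γ ⊆ {1,...,n} of cardinality d, there are exactly |G| − 1 codewords of C whose support is exactly γ. Consequently C has exactly C(n,d)·(|G| − 1) codewords of weight d. -/
/-!
A nonzero codeword has at least `d` nonzero entries, so a codeword vanishing on `n + 1 - d`
coordinates is zero: restriction to any such coordinate set `S` is injective on `C`, hence
bijective since `|C| = |G| ^ (n + 1 - d)`. For a `d`-set `γ` and `i ∈ γ` take `S = {i} ∪ γᶜ`: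
the codewords vanishing off `γ` correspond to their value at `i`, and the nonzero ones have
weight at least `d = |γ|`, so their support is exactly `γ`. Summing over the `C(n, d)` choices
of `γ` counts the words of weight `d`.
-/

open Finset Function

section HammingSupport

variable {ι G : Type*} [Fintype ι] [Zero G] [DecidableEq G]

lemma filter_ne_zero_eq_iff_support_eq {c : ι → G} {s : Finset ι} :
    ({j | c j ≠ 0} : Finset ι) = s ↔ support c = s := by
  rw [← coe_inj, coe_filter_univ]
  rfl

lemma hammingNorm_le_card_of_support_subset {c : ι → G} {s : Finset ι}
    (h : support c ⊆ s) : hammingNorm c ≤ #s :=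
  card_le_card fun j hj => h (by simpa using hj)

lemma support_eq_of_card_le_hammingNorm {c : ι → G} {s : Finset ι}
    (h : support c ⊆ s) (hs : #s ≤ hammingNorm c) : support c = s := by
  rw [← filter_ne_zero_eq_iff_support_eq]
  exact eq_of_subset_of_card_le (fun j hj => h (by simpa using hj)) hs

variable [Fintype G]

lemma card_hammingNorm_eq_of_card_support_eq {s : Set (ι → G)} {d k : ℕ}
    (h : ∀ γ : Finset ι, #γ = d → Nat.card {c // c ∈ s ∧ support c = γ} = k) :
    Nat.card {c // c ∈ s ∧ hammingNorm c = d} = (Fintype.card ι).choose d * k := by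
  classical
  set W : Finset (ι → G) := {c | c ∈ s ∧ hammingNorm c = d}
  have hmaps : (W : Set (ι → G)).MapsTo (fun c => ({j | c j ≠ 0} : Finset ι))
      ↑(powersetCard d (univ : Finset ι)) := by
    intro c hc
    simp_all [W, hammingNorm]
  have hfiber (γ : Finset ι) (hγ : #γ = d) :
      #{c ∈ W | ({j | c j ≠ 0} : Finset ι) = γ} = Nat.card {c // c ∈ s ∧ support c = γ} := by
    rw [Nat.card_eq_fintype_card, Fintype.card_subtype, filter_filter]
    congr! 2 with c
    rw [filter_ne_zero_eq_iff_support_eq]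
    refine ⟨fun hc => ⟨hc.1.1, hc.2⟩, fun hc => ⟨⟨hc.1, ?_⟩, hc.2⟩⟩
    rw [← hγ, ← filter_ne_zero_eq_iff_support_eq.mpr hc.2]
    rfl
  rw [Nat.card_eq_fintype_card, Fintype.card_subtype, card_eq_sum_card_fiberwise hmaps,
    sum_congr rfl fun γ hγ => (hfiber γ (mem_powersetCard_univ.mp hγ)).trans
      (h γ (mem_powersetCard_univ.mp hγ)),
    sum_const, card_powersetCard, card_univ, smul_eq_mul]

end HammingSupport

section MinimumDistance

variable {ι G : Type*} [Fintype ι] [AddCommGroup G] [DecidableEq G]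
  {C : AddSubgroup (ι → G)} {d : ℕ}

lemma eq_of_mem_of_eqOn_of_card_lt (hC : ∀ c ∈ C, c ≠ 0 → d ≤ hammingNorm c) {S : Finset ι}
    (hS : Fintype.card ι < #S + d) {c c' : ι → G} (hc : c ∈ C) (hc' : c' ∈ C)
    (h : Set.EqOn c c' S) : c = c' := by
  classical
  rw [← sub_eq_zero]
  by_contra hne
  have hsupp : support (c - c') ⊆ ↑Sᶜ := fun j hj =>
    mem_compl.mpr fun hjS => hj (sub_eq_zero.mpr (h hjS))
  have := (hC _ (sub_mem hc hc') hne).trans (hammingNorm_le_card_of_support_subset hsupp)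
  rw [card_compl] at this
  have := card_le_univ S
  omega

lemma exists_mem_eqOn_of_card_eq_s6 [Fintype G] (hC : ∀ c ∈ C, c ≠ 0 → d ≤ hammingNorm c)
    {S : Finset ι} (hS : Fintype.card ι < #S + d) (hcard : Nat.card C = Fintype.card G ^ #S)
    (f : ι → G) : ∃ c ∈ C, Set.EqOn c f S := by
  let restrict : C → (S → G) := fun c j => c.1 j
  have hinj : Injective restrict := fun c c' h =>
    Subtype.ext (eq_of_mem_of_eqOn_of_card_lt hC hS c.2 c'.2 fun j hj => congrFun h ⟨j, hj⟩)
  have hcard_le : Nat.card (S → G) ≤ Nat.card C := by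
    rw [hcard, Nat.card_fun, Nat.card_eq_finsetCard, Nat.card_eq_fintype_card]
  obtain ⟨c, hc⟩ := (hinj.bijective_of_nat_card_le hcard_le).2 (f ·)
  exact ⟨c, c.2, fun j hj => congrFun hc ⟨j, hj⟩⟩

lemma card_codeword_support_eq [Fintype G] (hC : ∀ c ∈ C, c ≠ 0 → d ≤ hammingNorm c)
    (hcard : Nat.card C = Fintype.card G ^ (Fintype.card ι + 1 - d))
    {γ : Finset ι} (hγ : #γ = d) (hγne : γ.Nonempty) :
    Nat.card {c // c ∈ C ∧ support c = γ} = Fintype.card G - 1 := by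
  classical
  obtain ⟨i, hi⟩ := hγne
  set S := insert i γᶜ
  have hdι : d ≤ Fintype.card ι := hγ ▸ card_le_univ γ
  have hS : #S = Fintype.card ι + 1 - d := by
    rw [card_insert_of_notMem (by simpa using hi), card_compl, hγ]
    omega
  have hSlt : Fintype.card ι < #S + d := by omega
  have hvanish {c : ι → G} (h : support c ⊆ γ) {j : ι} (hj : j ∉ γ) : c j = 0 :=
    notMem_support.mp fun hj' => hj (h hj')
  let F : {c // c ∈ C ∧ support c = γ} → {g : G // g ≠ 0} :=
    fun c => ⟨c.1 i, c.2.2.ge hi⟩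
  have hinj : Injective F := by
    rintro ⟨c, hc, hcγ⟩ ⟨c', hc', hc'γ⟩ h
    refine Subtype.ext (eq_of_mem_of_eqOn_of_card_lt hC hSlt hc hc' fun j hj => ?_)
    rcases mem_insert.mp hj with rfl | hj
    · exact congrArg Subtype.val h
    · show c j = c' j
      rw [hvanish hcγ.subset (mem_compl.mp hj), hvanish hc'γ.subset (mem_compl.mp hj)]
  have hsurj : Surjective F := by
    rintro ⟨g, hg⟩
    obtain ⟨c, hc, hcS⟩ := exists_mem_eqOn_of_card_eq_s6 hC hSlt (hS ▸ hcard) (Pi.single i g)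
    have hci : c i = g := by simpa using hcS (mem_insert_self i γᶜ)
    have hcγ : support c ⊆ γ := fun j hj => by
      by_contra hjγ
      have hji : j ≠ i := by rintro rfl; exact hjγ hi
      exact hj (by simpa [hji] using hcS (mem_insert_of_mem (mem_compl.mpr hjγ)))
    have hne : c ≠ 0 := fun h => hg (by rw [← hci, h, Pi.zero_apply])
    refine ⟨⟨c, hc, support_eq_of_card_le_hammingNorm hcγ ?_⟩, Subtype.ext hci⟩
    exact hγ ▸ hC c hc hne
  rw [Nat.card_congr (Equiv.ofBijective F ⟨hinj, hsurj⟩), Nat.card_eq_fintype_card,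
    Fintype.card_subtype_compl, Fintype.card_subtype_eq]

end MinimumDistance

theorem MDS_words_of_minimal_weight_general {G : Type*} [AddCommGroup G] [Fintype G] [DecidableEq G]
    (n d : ℕ)
    (C : AddSubgroup (Fin n → G))
    (hcard : Nat.card C = Fintype.card G ^ (n + 1 - d))
    (hmin : IsLeast {w | ∃ c ∈ C, c ≠ 0 ∧ hammingNorm c = w} d)
    (γ : Finset (Fin n)) (hγ : γ.card = d) :
    Nat.card {c : Fin n → G // c ∈ C ∧ {j | c j ≠ 0} = (γ : Set (Fin n))}
      = Fintype.card G - 1 ∧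
    Nat.card {c : Fin n → G // c ∈ C ∧ hammingNorm c = d}
      = n.choose d * (Fintype.card G - 1) := by
  have hC : ∀ c ∈ C, c ≠ 0 → d ≤ hammingNorm c := fun c hc hne => hmin.2 ⟨c, hc, hne, rfl⟩
  have hd : 0 < d := by
    obtain ⟨c, -, hne, rfl⟩ := hmin.1
    exact hammingNorm_pos_iff.mpr hne
  have hsupp (γ : Finset (Fin n)) (hγ : #γ = d) :
      Nat.card {c // c ∈ C ∧ support c = γ} = Fintype.card G - 1 :=
    card_codeword_support_eq hC (by rwa [Fintype.card_fin]) hγ (card_pos.mp (hγ ▸ hd))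
  refine ⟨hsupp γ hγ, ?_⟩
  simpa using card_hammingNorm_eq_of_card_support_eq (s := (C : Set (Fin n → G))) hsupp

/-- Let `C = MDS(n,d) ≤ Gⁿ` be an additive MDS code of minimum distance
`d` (so `|C| = |G|^(n+1-d)`).  For any set `γ` of `d` coordinates there are exactly
`|G| - 1` codewords of `C` with support exactly `γ`; consequently `C` has exactly
`C(n,d)·(|G| - 1)` codewords of Hamming weight `d`. -/
theorem MDS_words_of_minimal_weight {G : Type*} [AddCommGroup G] [Fintype G] [DecidableEq G]
    [Nontrivial G] (n d : ℕ)
    (C : AddSubgroup (Fin n → G))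
    (hcard : Nat.card C = Fintype.card G ^ (n + 1 - d))
    (hmin : IsLeast {w | ∃ c ∈ C, c ≠ 0 ∧ hammingNorm c = w} d)
    (γ : Finset (Fin n)) (hγ : γ.card = d) :
    Nat.card {c : Fin n → G // c ∈ C ∧ {j | c j ≠ 0} = (γ : Set (Fin n))}
      = Fintype.card G - 1 ∧
    Nat.card {c : Fin n → G // c ∈ C ∧ hammingNorm c = d}
      = n.choose d * (Fintype.card G - 1) :=
  MDS_words_of_minimal_weight_general n d C hcard hmin γ hγ
end

section
/- Let C = MDS(n,d) ≤ G^n be an additive MDS code of minimum distance d over a finite abelian group G of order q. Then for every s with d ≤ s ≤ n, the number of codewords of C of Hamming weight s equals C(n,s)·(q−1)·∑_{i=0}^{s−d} (−1)^i C(s−1,i) q^{s−d−i}. -/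
/-!
The codewords supported in a set `T` of coordinates are the kernel of the restriction of `C` to
the complement of `T`. Since no nonzero codeword vanishes on `n + 1 - d` coordinates, restriction to
any `n + 1 - d` coordinates is a bijection, so restriction to fewer coordinates is onto and the
kernel has `q ^ (|T| + 1 - d)` elements (one element when `|T| < d`, matching truncated
subtraction). Inclusion–exclusion over the coordinates of `T` then counts the codewords whose
support is exactly `T`, and Pascal's rule telescopes the resulting alternating sum into the closed
form.
-/

open Finset

section Support

variable {ι G : Type*} [Fintype ι] [DecidableEq ι] [Zero G] [DecidableEq G]

omit [DecidableEq ι] in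
theorem hammingNorm_le_card_of_forall_notMem {c : ι → G} {S : Finset ι}
    (hc : ∀ i ∉ S, c i = 0) : hammingNorm c ≤ #S :=
  card_le_card fun i hi => by
    by_contra h
    simp [hc i h] at hi

variable [Fintype G]

theorem card_filter_hammingNorm_eq_sum (p : (ι → G) → Prop) [DecidablePred p] (s : ℕ) :
    #{c | p c ∧ hammingNorm c = s} =
      ∑ T ∈ powersetCard s univ, #{c | p c ∧ ({i | c i ≠ 0} : Finset ι) = T} := by
  rw [card_eq_sum_card_fiberwise (f := fun c => ({i | c i ≠ 0} : Finset ι))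
    fun c hc => mem_powersetCard_univ.2 (mem_filter.1 hc).2.2]
  refine sum_congr rfl fun T hT => ?_
  rw [filter_filter]
  congr 1
  ext c
  simp only [mem_filter, mem_univ, true_and]
  constructor
  · rintro ⟨⟨hp, -⟩, hsupp⟩
    exact ⟨hp, hsupp⟩
  · rintro ⟨hp, rfl⟩
    exact ⟨⟨hp, mem_powersetCard_univ.1 hT⟩, rfl⟩

theorem card_filter_support_eq_sum (p : (ι → G) → Prop) [DecidablePred p] (T : Finset ι) :
    (#{c | p c ∧ ({i | c i ≠ 0} : Finset ι) = T} : ℤ) =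
      ∑ U ∈ T.powerset, (-1 : ℤ) ^ #U * #{c | p c ∧ ∀ i ∉ T \ U, c i = 0} := by
  have h := inclusion_exclusion_sum_inf_compl T (fun i => ({c | c i = 0} : Finset (ι → G)))
    (fun c => if p c ∧ ∀ i ∉ T, c i = 0 then (1 : ℤ) else 0)
  simp only [sum_boole, smul_eq_mul] at h
  rw [show ({c | p c ∧ ({i | c i ≠ 0} : Finset ι) = T} : Finset (ι → G)) =
      {c ∈ T.inf fun i => ({c | c i = 0} : Finset (ι → G))ᶜ | p c ∧ ∀ i ∉ T, c i = 0} by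
    ext c
    simp only [mem_filter, mem_univ, true_and, mem_inf, mem_compl, Finset.ext_iff]
    grind, h]
  refine sum_congr rfl fun U _ => ?_
  congr 3
  ext c
  simp only [mem_filter, mem_univ, true_and, mem_inf, mem_sdiff]
  grind

end Support

section AlternatingSums

variable {R : Type*} [CommRing R]

theorem sum_range_neg_one_pow_mul_choose_succ_mul (g : ℕ → R) (m : ℕ) :
    ∑ k ∈ range (m + 2), (-1) ^ k * ((m + 1).choose k : R) * g k =
      ∑ k ∈ range (m + 1), (-1) ^ k * (m.choose k : R) * (g k - g (k + 1)) := by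
  have hshift : ∑ k ∈ range (m + 1), (-1) ^ k * (m.choose k : R) * g k =
      ∑ k ∈ range (m + 1), (-1) ^ (k + 1) * (m.choose (k + 1) : R) * g (k + 1) + g 0 := by
    rw [sum_range_succ', sum_range_succ (n := m), Nat.choose_succ_self]
    simp
  rw [sum_range_succ']
  simp only [mul_sub, sum_sub_distrib]
  rw [hshift]
  simp only [Nat.choose_succ_succ', Nat.cast_add, mul_add, add_mul, sum_add_distrib, pow_succ,
    pow_zero, Nat.choose_zero_right, Nat.cast_one, mul_neg, neg_mul, mul_one, one_mul,
    sum_neg_distrib]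
  ring

theorem sum_range_neg_one_pow_mul_choose_mul_pow (q : R) {d s : ℕ} (hd : 1 ≤ d) (hds : d ≤ s) :
    ∑ k ∈ range (s + 1), (-1) ^ k * (s.choose k : R) * q ^ (s - k + 1 - d) =
      (q - 1) * ∑ i ∈ range (s - d + 1), (-1) ^ i * ((s - 1).choose i : R) * q ^ (s - d - i) := by
  obtain ⟨m, rfl⟩ : ∃ m, s = m + 1 := ⟨s - 1, by omega⟩
  rw [sum_range_neg_one_pow_mul_choose_succ_mul (fun k => q ^ (m + 1 - k + 1 - d)), mul_sum,
    Nat.add_sub_cancel]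
  symm
  calc _ = ∑ k ∈ range (m + 1 - d + 1),
        (-1) ^ k * (m.choose k : R) * (q ^ (m + 1 - k + 1 - d) - q ^ (m + 1 - (k + 1) + 1 - d)) := by
        refine sum_congr rfl fun k hk => ?_
        rw [mem_range] at hk
        rw [show m + 1 - k + 1 - d = m + 1 - d - k + 1 by omega,
          show m + 1 - (k + 1) + 1 - d = m + 1 - d - k by omega]
        ring
    _ = _ := by
        refine sum_subset (range_subset_range.2 (by omega)) fun k hk hk' => ?_
        rw [mem_range] at hk hk'
        rw [show m + 1 - k + 1 - d = 0 by omega, show m + 1 - (k + 1) + 1 - d = 0 by omega]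
        simp

end AlternatingSums

section Code

variable {ι G : Type*} [Fintype ι] [AddCommGroup G] [DecidableEq G]
  {C : AddSubgroup (ι → G)} {d : ℕ}

variable (C) in
def codewordRestrict (S : Set ι) : C →+ (S → G) where
  toFun c i := c.1 i
  map_zero' := rfl
  map_add' _ _ := rfl

theorem eq_zero_of_forall_notMem_eq_zero (hlb : ∀ c ∈ C, c ≠ 0 → d ≤ hammingNorm c)
    {c : ι → G} (hc : c ∈ C) {S : Finset ι} (hS : #S < d) (hcS : ∀ i ∉ S, c i = 0) : c = 0 :=
  by_contra fun h => (hlb c hc h).not_gt ((hammingNorm_le_card_of_forall_notMem hcS).trans_lt hS)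

variable [Fintype G]

variable (C d) in
structure IsMDSCode : Prop where
  one_le : 1 ≤ d
  card_eq : Nat.card C = Fintype.card G ^ (Fintype.card ι + 1 - d)
  le_hammingNorm : ∀ c ∈ C, c ≠ 0 → d ≤ hammingNorm c

variable [DecidableEq ι]

theorem IsMDSCode.codewordRestrict_surjective (hC : IsMDSCode C d) {S : Finset ι}
    (hS : #S ≤ Fintype.card ι + 1 - d) : Function.Surjective (codewordRestrict C S) := by
  obtain ⟨V, hSV, hV⟩ := exists_superset_card_eq hS (by have := hC.one_le; omega)
  have hinj : Function.Injective (codewordRestrict C V) := by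
    refine (injective_iff_map_eq_zero _).2 fun c hc => Subtype.ext <|
      eq_zero_of_forall_notMem_eq_zero hC.le_hammingNorm c.2 (S := Vᶜ) ?_ fun i hi => ?_
    · have := hC.one_le
      rw [card_compl, hV]
      omega
    · exact congrFun hc ⟨i, by simpa using hi⟩
  have hbij : Function.Bijective (codewordRestrict C V) :=
    hinj.bijective_of_nat_card_le <| by simp [hC.card_eq, hV]
  exact (Set.inclusion_injective (coe_subset.2 hSV)).surjective_comp_right.comp hbij.2

theorem IsMDSCode.card_supported (hC : IsMDSCode C d) (T : Finset ι) :
    Nat.card {c // c ∈ C ∧ ∀ i ∉ T, c i = 0} = Fintype.card G ^ (#T + 1 - d) := by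
  rcases lt_or_ge #T d with hT | hT
  · rw [Nat.sub_eq_zero_of_le hT, pow_zero, Nat.card_eq_one_iff_exists]
    exact ⟨⟨0, zero_mem C, fun _ _ => rfl⟩,
      fun c => Subtype.ext (eq_zero_of_forall_notMem_eq_zero hC.le_hammingNorm c.2.1 hT c.2.2)⟩
  set φ := codewordRestrict C (Tᶜ : Finset ι)
  have hsurj : Function.Surjective φ :=
    hC.codewordRestrict_surjective (by rw [card_compl]; omega)
  have hker : Nat.card φ.ker = Nat.card {c // c ∈ C ∧ ∀ i ∉ T, c i = 0} :=
    Nat.card_congr <|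
      (Equiv.subtypeEquivRight fun c => by simp [φ, codewordRestrict, funext_iff]).trans
        (Equiv.subtypeSubtypeEquivSubtypeInter (· ∈ C) fun c => ∀ i ∉ T, c i = 0)
  have hTι := card_le_univ T
  have key : Nat.card φ.ker * Fintype.card G ^ (Fintype.card ι - #T) =
      Fintype.card G ^ (#T + 1 - d) * Fintype.card G ^ (Fintype.card ι - #T) := by
    rw [← pow_add, show #T + 1 - d + (Fintype.card ι - #T) = Fintype.card ι + 1 - d by omega,
      ← hC.card_eq, ← φ.ker.card_mul_index, AddSubgroup.index_ker,
      φ.range_eq_top_of_surjective hsurj, AddSubgroup.card_top, Nat.card_fun, Nat.card_coe_set_eq,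
      Set.ncard_coe_finset, card_compl, Nat.card_eq_fintype_card (α := G)]
  rw [← hker]
  exact Nat.eq_of_mul_eq_mul_right (pow_pos Fintype.card_pos _) key

theorem IsMDSCode.card_support_eq [DecidablePred (· ∈ C)] (hC : IsMDSCode C d) {T : Finset ι}
    (hT : d ≤ #T) :
    (#{c | c ∈ C ∧ ({i | c i ≠ 0} : Finset ι) = T} : ℤ) =
      (Fintype.card G - 1) * ∑ i ∈ range (#T - d + 1),
        (-1) ^ i * ((#T - 1).choose i : ℤ) * (Fintype.card G : ℤ) ^ (#T - d - i) := by
  calc _ = ∑ U ∈ T.powerset, (-1 : ℤ) ^ #U * (Fintype.card G : ℤ) ^ (#T - #U + 1 - d) := by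
        rw [card_filter_support_eq_sum]
        refine sum_congr rfl fun U hU => ?_
        rw [← Fintype.card_subtype, ← Nat.card_eq_fintype_card, hC.card_supported,
          card_sdiff_of_subset (mem_powerset.1 hU)]
        push_cast
        rfl
    _ = ∑ k ∈ range (#T + 1),
          (-1 : ℤ) ^ k * ((#T).choose k : ℤ) * (Fintype.card G : ℤ) ^ (#T - k + 1 - d) := by
        rw [sum_powerset_apply_card fun k => (-1 : ℤ) ^ k * (Fintype.card G : ℤ) ^ (#T - k + 1 - d)]
        exact sum_congr rfl fun k _ => by rw [nsmul_eq_mul]; ring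
    _ = _ := sum_range_neg_one_pow_mul_choose_mul_pow _ hC.one_le hT

end Code

theorem MDS_weight_distribution_general {G : Type*} [AddCommGroup G] [Fintype G] [DecidableEq G]
    (n d : ℕ)
    (C : AddSubgroup (Fin n → G))
    (hcard : Nat.card C = Fintype.card G ^ (n + 1 - d))
    (hmin : IsLeast {w | ∃ c ∈ C, c ≠ 0 ∧ hammingNorm c = w} d) :
    ∀ s, d ≤ s → s ≤ n →
      (Nat.card {c : Fin n → G // c ∈ C ∧ hammingNorm c = s} : ℤ)
        = (n.choose s : ℤ) * ((Fintype.card G : ℤ) - 1) *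
          ∑ i ∈ Finset.range (s - d + 1),
            (-1 : ℤ) ^ i * ((s - 1).choose i : ℤ) * (Fintype.card G : ℤ) ^ (s - d - i) := by
  intro s hds _
  classical
  obtain ⟨⟨c₀, -, hc₀, hc₀d⟩, hlb⟩ := hmin
  have hC : IsMDSCode C d :=
    ⟨hc₀d ▸ hammingNorm_pos_iff.2 hc₀, by rwa [Fintype.card_fin], fun c hc h => hlb ⟨c, hc, h, rfl⟩⟩
  calc _ = ∑ T ∈ powersetCard s univ,
        (#{c | c ∈ C ∧ ({i | c i ≠ 0} : Finset (Fin n)) = T} : ℤ) := by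
        rw [Nat.card_eq_fintype_card, Fintype.card_subtype, card_filter_hammingNorm_eq_sum,
          Nat.cast_sum]
    _ = ∑ T ∈ powersetCard s univ, ((Fintype.card G : ℤ) - 1) * ∑ i ∈ range (s - d + 1),
          (-1 : ℤ) ^ i * ((s - 1).choose i : ℤ) * (Fintype.card G : ℤ) ^ (s - d - i) :=
        sum_congr rfl fun T hT => by
          obtain rfl := mem_powersetCard_univ.1 hT
          exact hC.card_support_eq hds
    _ = _ := by
        rw [sum_const, card_powersetCard, card_univ, Fintype.card_fin, nsmul_eq_mul, mul_assoc]

/-- Let `C = MDS(n,d) ≤ Gⁿ` be an additive MDS code of minimum distance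
`d` over a finite abelian group `G` of order `q` (so `|C| = q^(n+1-d)`).  For every `s`
with `d ≤ s ≤ n`, the number of codewords of Hamming weight `s` is
`C(n,s)·(q-1)·∑_{i=0}^{s-d} (-1)^i C(s-1,i) q^(s-d-i)`. -/
theorem MDS_weight_distribution {G : Type*} [AddCommGroup G] [Fintype G] [DecidableEq G]
    [Nontrivial G] (n d : ℕ)
    (C : AddSubgroup (Fin n → G))
    (hcard : Nat.card C = Fintype.card G ^ (n + 1 - d))
    (hmin : IsLeast {w | ∃ c ∈ C, c ≠ 0 ∧ hammingNorm c = w} d) :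
    ∀ s, d ≤ s → s ≤ n →
      (Nat.card {c : Fin n → G // c ∈ C ∧ hammingNorm c = s} : ℤ)
        = (n.choose s : ℤ) * ((Fintype.card G : ℤ) - 1) *
          ∑ i ∈ Finset.range (s - d + 1),
            (-1 : ℤ) ^ i * ((s - 1).choose i : ℤ) * (Fintype.card G : ℤ) ^ (s - d - i) :=
  MDS_weight_distribution_general n d C hcard hmin
end

section
/- Let q > 1 be an integer, n ≥ 1, and d with 2 ≤ d ≤ n. The MDS weight enumerators M_{n,d}(x,y) (defined by M_{n,d}(x,y) = x^n + ∑_{s=d}^{n} C(n,s)(q−1)[∑_{i=0}^{s−d}(−1)^i C(s−1,i) q^{s−d−i}] x^{n−s} y^s for d ≤ n, extended to all needed indices) satisfy the MacWilliams transformation identity q^{n+1−d} M_{n,n+2−d}(x,y) = M_{n,d}(x + (q−1)y, x − y). -/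
/-!
Write `f_d t = q ^ (t + 1 - d)` (truncated subtraction, so the exponent is `max (t + 1 - d) 0`).
The coefficient of `x ^ (n - s) * y ^ s` in `M_{n,d}` is `C(n, s)` times the `s`-th forward
difference of `f_d` at `0`, because `Δ f_d t = (q - 1) q ^ (t + 1 - d)` for `t + 1 ≥ d` and `0`
otherwise. Newton's expansion therefore gives
`M_{n,d}(x, y) = ∑ₜ C(n, t) f_d t (x - y) ^ (n - t) y ^ t`.
The substitution `x ↦ x + (q - 1) y`, `y ↦ x - y` sends the pair `(x - y, y)` to `(q y, x - y)`,
so after `t ↦ n - t` the identity reduces to `f_d (n - t) q ^ t = q ^ (n + 1 - d) f_{n+2-d} t`.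
-/

open MvPolynomial

/-- The MDS weight enumerator `M_{n,d}(x,y)` of length `n` and minimum distance `d`
over a group of order `q`:
`M_{n,d}(x,y) = xⁿ + ∑_{s=d}^{n} C(n,s)(q-1)[∑_{i=0}^{s-d}(-1)^i C(s-1,i) q^(s-d-i)] x^(n-s) y^s`. -/
noncomputable def mdsEnum (q n d : ℕ) : MvPolynomial (Fin 2) ℚ :=
  X 0 ^ n + ∑ s ∈ Finset.Icc d n,
    MvPolynomial.C ((n.choose s : ℚ) * ((q : ℚ) - 1) *
        ∑ i ∈ Finset.range (s - d + 1),
          (-1 : ℚ) ^ i * ((s - 1).choose i : ℚ) * (q : ℚ) ^ (s - d - i)) *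
      X 0 ^ (n - s) * X 1 ^ s

open Finset fwdDiff

theorem sum_Ico_choose_mul_choose_mul_pow {R : Type*} [CommSemiring R] (u y : R) {n k : ℕ}
    (hk : k ≤ n) :
    ∑ t ∈ Ico k (n + 1), (n.choose t * t.choose k : R) * u ^ (n - t) * y ^ t =
      n.choose k * (u + y) ^ (n - k) * y ^ k := by
  rw [sum_Ico_eq_sum_range, show n + 1 - k = n - k + 1 by omega, add_comm u, add_pow,
    mul_sum, sum_mul]
  refine sum_congr rfl fun j hj => ?_
  have hj : j ≤ n - k := Nat.lt_succ_iff.mp (mem_range.mp hj)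
  rw [← Nat.cast_mul, Nat.choose_mul (by omega), Nat.add_sub_cancel_left,
    show n - (k + j) = n - k - j by omega]
  push_cast
  ring

theorem sum_choose_mul_pow_eq_sum_fwdDiff_iter {R : Type*} [CommRing R] (f : ℕ → R)
    (u y : R) (n : ℕ) :
    ∑ t ∈ range (n + 1), (n.choose t : R) * f t * u ^ (n - t) * y ^ t =
      ∑ k ∈ range (n + 1), (n.choose k : R) * Δ_[1] ^[k] f 0 * (u + y) ^ (n - k) * y ^ k := by
  have newton (t : ℕ) : f t = ∑ k ∈ range (t + 1), (t.choose k : R) * Δ_[1] ^[k] f 0 := by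
    simpa [nsmul_eq_mul] using shift_eq_sum_fwdDiff_iter 1 f t 0
  calc _ = ∑ t ∈ Ico 0 (n + 1), ∑ k ∈ Ico 0 (t + 1),
          Δ_[1] ^[k] f 0 * ((n.choose t * t.choose k : R) * u ^ (n - t) * y ^ t) := by
        refine sum_congr (range_eq_Ico _) fun t _ => ?_
        rw [newton, ← range_eq_Ico, mul_sum, sum_mul, sum_mul]
        exact sum_congr rfl fun k _ => by ring
    _ = ∑ k ∈ Ico 0 (n + 1), Δ_[1] ^[k] f 0 * ∑ t ∈ Ico k (n + 1),
          (n.choose t * t.choose k : R) * u ^ (n - t) * y ^ t := by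
        rw [← sum_Ico_Ico_comm]
        simp only [mul_sum]
    _ = _ := by
        rw [← range_eq_Ico]
        refine sum_congr rfl fun k hk => ?_
        rw [sum_Ico_choose_mul_choose_mul_pow u y (Nat.lt_succ_iff.mp (mem_range.mp hk))]
        ring

theorem fwdDiff_pow_tsub {R : Type*} [CommRing R] (q : R) (d t : ℕ) :
    Δ_[1] (fun t => q ^ (t + 1 - d)) t = if d ≤ t + 1 then (q - 1) * q ^ (t + 1 - d) else 0 := by
  simp only [fwdDiff]
  split_ifs with h
  · rw [show t + 1 + 1 - d = t + 1 - d + 1 by omega, pow_succ]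
    ring
  · rw [show t + 1 + 1 - d = 0 by omega, show t + 1 - d = 0 by omega, sub_self]

theorem fwdDiff_iter_pow_tsub {R : Type*} [CommRing R] (q : R) {d s : ℕ} (hd : 1 ≤ d)
    (hs : 1 ≤ s) :
    Δ_[1] ^[s] (fun t => q ^ (t + 1 - d)) 0 =
      (q - 1) *
        ∑ i ∈ range (s + 1 - d), (-1) ^ i * ((s - 1).choose i : R) * q ^ (s - d - i) := by
  obtain ⟨m, rfl⟩ : ∃ m, s = m + 1 := ⟨s - 1, by omega⟩
  rw [Function.iterate_succ_apply, fwdDiff_iter_eq_sum_shift, ← sum_range_reflect, mul_sum,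
    Nat.add_sub_cancel]
  simp only [zero_add, smul_eq_mul, mul_one, fwdDiff_pow_tsub, zsmul_eq_mul]
  refine (sum_subset (range_subset_range.mpr (by omega)) fun i hi hi' => ?_).symm.trans
    (sum_congr rfl fun i hi => ?_)
  · simp only [mem_range] at hi hi'
    rw [if_neg (by omega), mul_zero]
  · simp only [mem_range] at hi
    rw [if_pos (by omega), Nat.choose_symm (by omega),
      show m - i + 1 - d = m + 1 - d - i by omega, show m - (m - i) = i by omega]
    push_cast
    ring

theorem mdsEnum_eq_sum_sub_pow_mul_pow (q n : ℕ) {d : ℕ} (hd : 1 ≤ d) :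
    mdsEnum q n d = ∑ t ∈ range (n + 1),
      (n.choose t : MvPolynomial (Fin 2) ℚ) * (q : MvPolynomial (Fin 2) ℚ) ^ (t + 1 - d) *
        (X 0 - X 1) ^ (n - t) * X 1 ^ t := by
  rw [sum_choose_mul_pow_eq_sum_fwdDiff_iter, sub_add_cancel, range_eq_Ico,
    sum_eq_sum_Ico_succ_bot (by omega : 0 < n + 1), zero_add, Ico_add_one_right_eq_Icc, mdsEnum]
  refine congrArg₂ (· + ·) ?_ ?_
  · simp [Nat.sub_eq_zero_of_le hd]
  refine (sum_congr rfl fun s hs => ?_).trans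
    (sum_subset (Icc_subset_Icc hd le_rfl) fun s hs hs' => ?_)
  · simp only [mem_Icc] at hs
    rw [fwdDiff_iter_pow_tsub _ hd (by omega), show s + 1 - d = s - d + 1 by omega]
    simp [mul_assoc]
  · simp only [mem_Icc] at hs hs'
    rw [fwdDiff_iter_pow_tsub _ hd hs.1, range_eq_empty_iff.mpr (by omega), sum_empty]
    simp

theorem MDS_MacWilliams_general (q n d : ℕ) (hd : 2 ≤ d) (hdn : d ≤ n) :
    ((q : ℚ) ^ (n + 1 - d)) • mdsEnum q n (n + 2 - d)
      = MvPolynomial.bind₁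
          (fun j : Fin 2 => if j = 0 then X 0 + MvPolynomial.C ((q : ℚ) - 1) * X 1
            else X 0 - X 1)
          (mdsEnum q n d) := by
  set g : Fin 2 → MvPolynomial (Fin 2) ℚ := fun j => if j = 0 then X 0 + C ((q : ℚ) - 1) * X 1
    else X 0 - X 1
  have hy : bind₁ g (X 1) = X 0 - X 1 := by simp [g]
  have hxy : bind₁ g (X 0 - X 1) = (q : MvPolynomial (Fin 2) ℚ) * X 1 := by
    simp only [g, Fin.isValue, map_sub, map_natCast, C_1, bind₁_X_right, ↓reduceIte,
      one_ne_zero, add_sub_sub_cancel]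
    ring
  rw [mdsEnum_eq_sum_sub_pow_mul_pow q n (by omega : 1 ≤ d),
    mdsEnum_eq_sum_sub_pow_mul_pow q n (by omega : 1 ≤ n + 2 - d),
    smul_sum, map_sum]
  conv_rhs => rw [← sum_range_reflect]
  refine sum_congr rfl fun t ht => ?_
  have ht : t ≤ n := Nat.lt_succ_iff.mp (mem_range.mp ht)
  have hexp : n + 1 - d + (t + 1 - (n + 2 - d)) = n - t + 1 - d + t := by omega
  simp only [map_mul, map_pow, map_natCast, hxy, hy, smul_eq_C_mul]
  rw [Nat.add_sub_cancel, Nat.choose_symm ht, Nat.sub_sub_self ht, mul_pow]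
  linear_combination
    ((n.choose t : MvPolynomial (Fin 2) ℚ) * (X 0 - X 1) ^ (n - t) * X 1 ^ t) *
      congrArg ((q : MvPolynomial (Fin 2) ℚ) ^ ·) hexp

/-- The MacWilliams transformation identity for MDS weight
enumerators: `q^(n+1-d) · M_{n,n+2-d}(x,y) = M_{n,d}(x + (q-1)y, x - y)`. -/
theorem MDS_MacWilliams (q n d : ℕ) (hq : 1 < q) (hd : 2 ≤ d) (hdn : d ≤ n) :
    ((q : ℚ) ^ (n + 1 - d)) • mdsEnum q n (n + 2 - d)
      = MvPolynomial.bind₁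
          (fun j : Fin 2 => if j = 0 then X 0 + MvPolynomial.C ((q : ℚ) - 1) * X 1
            else X 0 - X 1)
          (mdsEnum q n d) :=
  MDS_MacWilliams_general q n d hd hdn
end

section
/- Let q > 1, n ≥ 1, and 2 ≤ d ≤ n. The polynomials {M_{n,d+i}(x,y) − x^n : 0 ≤ i ≤ n − d} form a basis of the ℚ-vector space of homogeneous polynomials of degree n in x, y all of whose monomials have degree at least d in y. -/
open MvPolynomial

/-! Read off the coefficients of `x^(n-s) y^s`, `d ≤ s ≤ n`: the polynomial `M_{n,d+i} - xⁿ`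
involves only `s ≥ d + i`, and its coefficient at `s = d + i` is `C(n, d+i) (q - 1) ≠ 0`. This
triangular shape makes the `n - d + 1` polynomials linearly independent, and as they lie in the
span of the `n - d + 1` monomials, they span it. -/

theorem linearIndependent_of_triangular {ι R M : Type*} [CommRing R] [IsDomain R]
    [AddCommGroup M] [Module R M] [Fintype ι] [LinearOrder ι]
    (v : ι → M) (f : ι → M →ₗ[R] R) (htri : ∀ i j, j < i → f j (v i) = 0)
    (hdiag : ∀ i, f i (v i) ≠ 0) : LinearIndependent R v := by
  let A : Matrix ι ι R := Matrix.of fun i j => f j (v i)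
  have hA : A.IsUpperTriangular := fun i j hji => htri i j hji
  have hdet : A.det ≠ 0 := by
    rw [Matrix.det_of_isUpperTriangular hA]
    exact Finset.prod_ne_zero_iff.2 fun i _ => hdiag i
  exact LinearIndependent.of_comp (LinearMap.pi f)
    (Matrix.linearIndependent_rows_of_det_ne_zero hdet)

theorem LinearIndependent.span_range_eq_of_le {ι K V : Type*} [DivisionRing K] [AddCommGroup V]
    [Module K V] [Fintype ι] {v b : ι → V} (hv : LinearIndependent K v)
    (hle : Submodule.span K (Set.range v) ≤ Submodule.span K (Set.range b)) :
    Submodule.span K (Set.range v) = Submodule.span K (Set.range b) := by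
  have := FiniteDimensional.span_of_finite K (Set.finite_range b)
  refine Submodule.eq_of_le_of_finrank_le hle ?_
  rw [finrank_span_eq_card hv]
  exact finrank_range_le_card b

noncomputable def xyExponent (n s : ℕ) : Fin 2 →₀ ℕ :=
  Finsupp.single 0 (n - s) + Finsupp.single 1 s

theorem xyExponent_injective (n : ℕ) : Function.Injective (xyExponent n) := fun s t h => by
  simpa [xyExponent] using DFunLike.congr_fun h 1

theorem X_pow_mul_X_pow_eq_monomial_xyExponent {R : Type*} [CommSemiring R] (n s : ℕ) :
    (X 0 : MvPolynomial (Fin 2) R) ^ (n - s) * X 1 ^ s = monomial (xyExponent n s) 1 := by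
  rw [X_pow_eq_monomial, X_pow_eq_monomial, monomial_mul, one_mul, xyExponent]

def mdsCoeff (q n d s : ℕ) : ℚ :=
  (n.choose s : ℚ) * ((q : ℚ) - 1) *
    ∑ i ∈ Finset.range (s - d + 1),
      (-1 : ℚ) ^ i * ((s - 1).choose i : ℚ) * (q : ℚ) ^ (s - d - i)

theorem mdsEnum_sub_X_pow (q n d : ℕ) :
    mdsEnum q n d - X 0 ^ n =
      ∑ s ∈ Finset.Icc d n,
        mdsCoeff q n d s • ((X 0 : MvPolynomial (Fin 2) ℚ) ^ (n - s) * X 1 ^ s) := by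
  simp only [mdsEnum, add_sub_cancel_left, smul_eq_C_mul, mul_assoc, mdsCoeff]

theorem coeff_mdsEnum_sub_X_pow (q n d t : ℕ) :
    coeff (xyExponent n t) (mdsEnum q n d - X 0 ^ n) =
      if t ∈ Finset.Icc d n then mdsCoeff q n d t else 0 := by
  simp only [mdsEnum_sub_X_pow, coeff_sum, coeff_smul, X_pow_mul_X_pow_eq_monomial_xyExponent,
    coeff_monomial, (xyExponent_injective n).eq_iff, smul_eq_mul, mul_ite, mul_one, mul_zero,
    Finset.sum_ite_eq']

theorem coeff_mdsEnum_sub_X_pow_of_lt {q n d t : ℕ} (h : t < d) :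
    coeff (xyExponent n t) (mdsEnum q n d - X 0 ^ n) = 0 := by
  rw [coeff_mdsEnum_sub_X_pow, if_neg fun ht => (Finset.mem_Icc.1 ht).1.not_gt h]

theorem coeff_mdsEnum_sub_X_pow_self (q : ℕ) {n d : ℕ} (h : d ≤ n) :
    coeff (xyExponent n d) (mdsEnum q n d - X 0 ^ n) = n.choose d * ((q : ℚ) - 1) := by
  rw [coeff_mdsEnum_sub_X_pow, if_pos (Finset.mem_Icc.2 ⟨le_rfl, h⟩)]
  simp [mdsCoeff]

theorem mdsEnum_sub_X_pow_mem_span {q n d d' : ℕ} (h : d ≤ d') :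
    mdsEnum q n d' - X 0 ^ n ∈ Submodule.span ℚ
      ((fun s : ℕ => (X 0 : MvPolynomial (Fin 2) ℚ) ^ (n - s) * X 1 ^ s) '' Set.Icc d n) := by
  rw [mdsEnum_sub_X_pow]
  refine Submodule.sum_mem _ fun s hs => Submodule.smul_mem _ _ (Submodule.subset_span ?_)
  rw [Finset.mem_Icc] at hs
  exact ⟨s, ⟨h.trans hs.1, hs.2⟩, rfl⟩

theorem image_Icc_eq_range_fin {α : Type*} (f : ℕ → α) {d n : ℕ} (hdn : d ≤ n) :
    f '' Set.Icc d n = Set.range fun i : Fin (n - d + 1) => f (d + i) := by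
  ext x
  constructor
  · rintro ⟨s, ⟨hds, hsn⟩, rfl⟩
    exact ⟨⟨s - d, by omega⟩, by simp only [Nat.add_sub_cancel' hds]⟩
  · rintro ⟨i, rfl⟩
    exact ⟨d + i, ⟨by omega, by omega⟩, rfl⟩

theorem MDS_enums_form_basis_general (q n d : ℕ) (hq : 1 < q) (hdn : d ≤ n) :
    LinearIndependent ℚ
        (fun i : Fin (n - d + 1) => mdsEnum q n (d + (i : ℕ)) - X 0 ^ n) ∧
      Submodule.span ℚ
          (Set.range (fun i : Fin (n - d + 1) => mdsEnum q n (d + (i : ℕ)) - X 0 ^ n))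
        = Submodule.span ℚ
            ((fun s : ℕ => (X 0 : MvPolynomial (Fin 2) ℚ) ^ (n - s) * X 1 ^ s) ''
              Set.Icc d n) := by
  have hq' : (q : ℚ) - 1 ≠ 0 := sub_ne_zero.2 (by exact_mod_cast hq.ne')
  have hv : LinearIndependent ℚ fun i : Fin (n - d + 1) =>
      mdsEnum q n (d + (i : ℕ)) - X 0 ^ n := by
    refine linearIndependent_of_triangular _ (fun j => lcoeff ℚ (xyExponent n (d + j)))
      (fun i j hji => coeff_mdsEnum_sub_X_pow_of_lt (by omega)) (fun i => ?_)
    have hi : d + (i : ℕ) ≤ n := by omega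
    rw [lcoeff_apply, coeff_mdsEnum_sub_X_pow_self q hi]
    exact mul_ne_zero (by exact_mod_cast (Nat.choose_pos hi).ne') hq'
  have hle : Submodule.span ℚ (Set.range fun i : Fin (n - d + 1) =>
      mdsEnum q n (d + (i : ℕ)) - X 0 ^ n) ≤ Submodule.span ℚ
        ((fun s : ℕ => (X 0 : MvPolynomial (Fin 2) ℚ) ^ (n - s) * X 1 ^ s) '' Set.Icc d n) :=
    Submodule.span_le.2 <| Set.range_subset_iff.2 fun i =>
      mdsEnum_sub_X_pow_mem_span (Nat.le_add_right d i)
  rw [image_Icc_eq_range_fin _ hdn] at hle ⊢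
  exact ⟨hv, hv.span_range_eq_of_le hle⟩

/-- For `q > 1` and `2 ≤ d ≤ n`, the polynomials
`M_{n,d+i}(x,y) - xⁿ`, `0 ≤ i ≤ n-d`, form a basis of the ℚ-vector space of homogeneous
polynomials of degree `n` in `x,y` whose monomials all have degree at least `d` in `y`
(the span of the monomials `x^(n-s) y^s`, `d ≤ s ≤ n`). -/
theorem MDS_enums_form_basis (q n d : ℕ) (hq : 1 < q) (hd : 2 ≤ d) (hdn : d ≤ n) :
    LinearIndependent ℚ
        (fun i : Fin (n - d + 1) => mdsEnum q n (d + (i : ℕ)) - X 0 ^ n) ∧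
      Submodule.span ℚ
          (Set.range (fun i : Fin (n - d + 1) => mdsEnum q n (d + (i : ℕ)) - X 0 ^ n))
        = Submodule.span ℚ
            ((fun s : ℕ => (X 0 : MvPolynomial (Fin 2) ℚ) ^ (n - s) * X 1 ^ s) ''
              Set.Icc d n) :=
  MDS_enums_form_basis_general q n d hq hdn
end
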